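/- The Artin group A(2n) = ⟨x, y | (xy)^n = (yx)^n⟩ with n ≥ 2 is isomorphic to the group with presentation ⟨y_0, …, y_{n−1}, t | t⁻¹ y_i t = φ(y_i), i = 0, …, n−1⟩, where φ(y_0) = y_0 y_1 ⋯ y_{n−2} y_{n−1} y_{n−2}⁻¹ ⋯ y_1⁻¹ y_0⁻¹ and φ(y_i) = y_{i−1} for 1 ≤ i ≤ n−1, via the map sending x ↦ t and y ↦ y_0. -/

import Mathlib

/-- Relations of the Artin group `A(2n) = ⟨x, y | (xy)^n = (yx)^n⟩`,
with `true ↦ x` and `false ↦ y`. -/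
def artinRels (n : ℕ) : Set (FreeGroup Bool) :=
  {(FreeGroup.of true * FreeGroup.of false) ^ n *
    ((FreeGroup.of false * FreeGroup.of true) ^ n)⁻¹}

/-- The word `φ(y_i)`:  `φ(y_0) = y_0 ⋯ y_{n-2} y_{n-1} y_{n-2}⁻¹ ⋯ y_0⁻¹` and
`φ(y_i) = y_{i-1}` for `i ≥ 1`; here `none ↦ t` and `some i ↦ y_i`. -/
def phiWord (n : ℕ) (hn : 2 ≤ n) (i : Fin n) : FreeGroup (Option (Fin n)) :=
  if (i : ℕ) = 0 then
    (((List.finRange (n - 1)).map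
        (fun j => FreeGroup.of (some (Fin.castLE (Nat.sub_le n 1) j)))).prod) *
      FreeGroup.of (some ⟨n - 1, by omega⟩) *
    (((List.finRange (n - 1)).map
        (fun j => FreeGroup.of (some (Fin.castLE (Nat.sub_le n 1) j)))).prod)⁻¹
  else FreeGroup.of (some ⟨(i : ℕ) - 1, lt_of_le_of_lt (Nat.sub_le _ _) i.isLt⟩)

/-- Relations `t⁻¹ y_i t = φ(y_i)`. -/
def mappingTorusRels (n : ℕ) (hn : 2 ≤ n) : Set (FreeGroup (Option (Fin n))) :=
  ⋃ i : Fin n,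
    {(FreeGroup.of none)⁻¹ * FreeGroup.of (some i) * FreeGroup.of none *
      (phiWord n hn i)⁻¹}

/-!
Put `y_i = t^i y t^{-i}`. Then `y_0 ⋯ y_{n-2} = (y t)^{n-1} t^{-(n-1)}`, so the relation for `i = 0`
reads `t⁻¹ y t = (y t)^{n-1} y (y t)^{-(n-1)}`, which is equivalent to `(t y)^n = (y t)^n`, while
the relations for `i ≥ 1` hold automatically. Conversely, in the second presentation the relations
for `i ≥ 1` force `y_i = t^i y_0 t^{-i}`. Hence `x ↦ t, y ↦ y_0` and `t ↦ x, y_i ↦ x^i y x^{-i}`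
are mutually inverse homomorphisms.
-/

section GroupIdentities

variable {G : Type*} [Group G]

theorem prod_map_range_pow_mul_mul_inv (a b : G) (m : ℕ) :
    ((List.range m).map fun j => a ^ j * b * (a ^ j)⁻¹).prod = (b * a) ^ m * (a ^ m)⁻¹ := by
  induction m with
  | zero => simp
  | succ m ih =>
    rw [List.range_succ, List.map_append, List.prod_append, ih, pow_succ (b * a), pow_succ' a]
    simp only [List.map_cons, List.map_nil, List.prod_cons, List.prod_nil, mul_one]
    group

theorem mul_pow_succ_eq_iff (a b : G) (m : ℕ) :
    (a * b) ^ (m + 1) = (b * a) ^ (m + 1) ↔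
      a⁻¹ * b * a = (b * a) ^ m * b * ((b * a) ^ m)⁻¹ := by
  rw [pow_succ, pow_succ, ← mul_assoc, mul_pow_mul, ← (Commute.self_pow (b * a) m).eq,
    eq_mul_inv_iff_mul_eq]
  simp only [mul_assoc, inv_mul_eq_iff_eq_mul]
  exact eq_comm

end GroupIdentities

theorem PresentedGroup.lift_of_eq_one_of_mem {α : Type*} {rels : Set (FreeGroup α)}
    {r : FreeGroup α} (hr : r ∈ rels) : FreeGroup.lift (PresentedGroup.of (rels := rels)) r = 1 := by
  rw [show FreeGroup.lift PresentedGroup.of = PresentedGroup.mk rels from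
    FreeGroup.ext_hom _ _ fun _ => rfl]
  exact PresentedGroup.one_of_mem hr

section Relations

variable {G : Type*} [Group G] {n : ℕ} (hn : 2 ≤ n)

theorem forall_lift_artinRels_eq_one_iff (f : Bool → G) :
    (∀ r ∈ artinRels n, FreeGroup.lift f r = 1) ↔ (f true * f false) ^ n = (f false * f true) ^ n := by
  simp [artinRels, mul_inv_eq_one]

theorem forall_lift_mappingTorusRels_eq_one_iff (f : Option (Fin n) → G) :
    (∀ r ∈ mappingTorusRels n hn, FreeGroup.lift f r = 1) ↔
      ∀ i, (f none)⁻¹ * f (some i) * f none = FreeGroup.lift f (phiWord n hn i) := by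
  simp [mappingTorusRels, mul_inv_eq_one]

variable (n) in
def powConj (t y : G) : Option (Fin n) → G
  | none => t
  | some i => t ^ (i : ℕ) * y * (t ^ (i : ℕ))⁻¹

theorem map_powConj {H : Type*} [Group H] (φ : G →* H) (t y : G) (o : Option (Fin n)) :
    φ (powConj n t y o) = powConj n (φ t) (φ y) o := by
  cases o <;> simp [powConj]

theorem lift_powConj_phiWord_zero (t y : G) :
    FreeGroup.lift (powConj n t y) (phiWord n hn ⟨0, Nat.zero_lt_of_lt hn⟩) =
      (y * t) ^ (n - 1) * y * ((y * t) ^ (n - 1))⁻¹ := by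
  have hprod : (FreeGroup.lift (powConj n t y)) ∘
      (fun j : Fin (n - 1) => FreeGroup.of (some (Fin.castLE (Nat.sub_le n 1) j))) =
        (fun j : ℕ => t ^ j * y * (t ^ j)⁻¹) ∘ Fin.val := by
    funext j
    simp [powConj]
  rw [phiWord, if_pos rfl, map_mul, map_mul, map_inv, map_list_prod, List.map_map, hprod, ← List.map_map,
    List.map_coe_finRange_eq_range, prod_map_range_pow_mul_mul_inv, FreeGroup.lift_apply_of]
  simp only [powConj]
  group

theorem forall_lift_powConj_mappingTorusRels_iff (t y : G) :
    (∀ r ∈ mappingTorusRels n hn, FreeGroup.lift (powConj n t y) r = 1) ↔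
      (t * y) ^ n = (y * t) ^ n := by
  obtain ⟨m, rfl⟩ : ∃ m, n = m + 1 := ⟨n - 1, by omega⟩
  have h0 := lift_powConj_phiWord_zero hn t y
  rw [Nat.add_sub_cancel] at h0
  rw [forall_lift_mappingTorusRels_eq_one_iff, mul_pow_succ_eq_iff, ← h0]
  refine ⟨fun h => by simpa [powConj] using h 0, fun h i => ?_⟩
  cases i using Fin.cases with
  | zero => simpa [powConj] using h
  | succ j =>
    rw [phiWord, if_neg (by simp)]
    simp only [FreeGroup.lift_apply_of, powConj, Fin.val_succ, Nat.add_sub_cancel, pow_succ']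
    group

theorem eq_powConj_of_forall_lift_mappingTorusRels (f : Option (Fin n) → G)
    (hf : ∀ r ∈ mappingTorusRels n hn, FreeGroup.lift f r = 1) :
    f = powConj n (f none) (f (some ⟨0, Nat.zero_lt_of_lt hn⟩)) := by
  have hrel := (forall_lift_mappingTorusRels_eq_one_iff hn f).1 hf
  funext o
  rcases o with _ | ⟨k, hk⟩
  · rfl
  induction k with
  | zero => simp [powConj]
  | succ k ih =>
    have hk' := hrel ⟨k + 1, hk⟩
    rw [phiWord, if_neg (by simp), FreeGroup.lift_apply_of] at hk'
    simp only [Nat.add_sub_cancel, ih (by omega), powConj] at hk' ⊢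
    calc f (some ⟨k + 1, hk⟩)
        = f none * ((f none)⁻¹ * f (some ⟨k + 1, hk⟩) * f none) * (f none)⁻¹ := by group
      _ = _ := by rw [hk', pow_succ']; group

end Relations

theorem stmt_5 (n : ℕ) (hn : 2 ≤ n) :
    ∃ e : PresentedGroup (artinRels n) ≃* PresentedGroup (mappingTorusRels n hn),
      e (PresentedGroup.of true) = PresentedGroup.of none ∧
      e (PresentedGroup.of false) = PresentedGroup.of (some ⟨0, by omega⟩) := by
  have of_eq_powConj := eq_powConj_of_forall_lift_mappingTorusRels hn PresentedGroup.of
    fun _ => PresentedGroup.lift_of_eq_one_of_mem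
  have artin_rel := (forall_lift_artinRels_eq_one_iff (n := n) PresentedGroup.of).1
    fun _ => PresentedGroup.lift_of_eq_one_of_mem
  have torus_rel := (forall_lift_powConj_mappingTorusRels_iff hn _ _).1 <| by
    rw [← of_eq_powConj]
    exact fun _ => PresentedGroup.lift_of_eq_one_of_mem
  let toTorus := PresentedGroup.toGroup ((forall_lift_artinRels_eq_one_iff (n := n)
    fun b => bif b then PresentedGroup.of none
      else (PresentedGroup.of (some ⟨0, by omega⟩) : PresentedGroup (mappingTorusRels n hn))).2
      torus_rel)
  let toArtin := PresentedGroup.toGroup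
    ((forall_lift_powConj_mappingTorusRels_iff hn _ _).2 artin_rel)
  refine ⟨toTorus.toMulEquiv toArtin ?_ ?_, rfl, rfl⟩
  · refine PresentedGroup.ext fun b => ?_
    cases b <;> simp [toTorus, toArtin, PresentedGroup.toGroup.of, powConj]
  · refine PresentedGroup.ext fun o => ?_
    simp only [MonoidHom.comp_apply, toTorus, toArtin, PresentedGroup.toGroup.of, map_powConj]
    exact (congrFun of_eq_powConj o).symm
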